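/- There exists a constant C > 0 such that for every integer N ≥ 3 the following holds. Let ξ_j = π(2j−1)/(2(N−1)) for j = 1, …, N−1 and define the Chebyshev mesh of [0,1] by x_0 = 0, x_j = (1 − cos ξ_j)/2 for j = 1, …, N−1, and x_N = 1. For j = 1, …, N set |K_j| = x_j − x_{j−1}. Then Σ_{j=1}^N 1 / |K_j| ≤ C N² ln N. -/
import Mathlib

open Real Finset

/-- Nodes of the one-dimensional Chebyshev mesh of `[0,1]`:
`x_0 = 0`, `x_j = (1 - cos(π(2j-1)/(2(N-1))))/2` for `1 ≤ j ≤ N-1`, `x_N = 1`. -/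
noncomputable def chebNode (N j : ℕ) : ℝ :=
  if j = 0 then 0 else if j = N then 1
  else (1 - Real.cos (Real.pi * (2 * (j : ℝ) - 1) / (2 * ((N : ℝ) - 1)))) / 2

lemma cheb_aux_endpoint {n : ℕ} (hn : 1 ≤ n) : (1:ℝ) / (2*n) ≤ Real.sin (π / (4*n)) := by
  have hn' : (1:ℝ) ≤ n := by exact_mod_cast hn
  have h0 : (0:ℝ) ≤ π / (4*n) := by positivity
  have h1 : π / (4*n) ≤ π / 2 := by
    apply div_le_div_of_nonneg_left pi_pos.le (by norm_num) (by nlinarith)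
  have h := Real.mul_le_sin h0 h1
  have hπ : (π:ℝ) ≠ 0 := pi_ne_zero
  calc (1:ℝ)/(2*n) = 2/π * (π/(4*n)) := by field_simp; ring
    _ ≤ _ := h

lemma cheb_aux_half {n : ℕ} (hn : 1 ≤ n) : (1:ℝ) / n ≤ Real.sin (π / (2*n)) := by
  have hn' : (1:ℝ) ≤ n := by exact_mod_cast hn
  have h0 : (0:ℝ) ≤ π / (2*n) := by positivity
  have h1 : π / (2*n) ≤ π / 2 := by
    apply div_le_div_of_nonneg_left pi_pos.le (by norm_num) (by nlinarith)
  have h := Real.mul_le_sin h0 h1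
  have hπ : (π:ℝ) ≠ 0 := pi_ne_zero
  calc (1:ℝ)/n = 2/π * (π/(2*n)) := by field_simp
    _ ≤ _ := h

lemma cheb_aux_sin_pos {n k : ℕ} (hk : 1 ≤ k) (hkn : k < n) :
    0 < Real.sin (π * k / n) := by
  have hn' : (0:ℝ) < n := by exact_mod_cast Nat.zero_lt_of_lt hkn
  apply Real.sin_pos_of_pos_of_lt_pi
  · have hkp : (0:ℝ) < (k:ℝ) := by exact_mod_cast hk
    have := pi_pos
    positivity
  · have hkR : (k:ℝ) < n := by exact_mod_cast hkn
    rw [div_lt_iff₀ hn']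
    nlinarith [pi_pos]

lemma cheb_aux_inv_sin {n k : ℕ} (hk : 1 ≤ k) (hkn : k < n) :
    (Real.sin (π * k / n))⁻¹ ≤ ((n:ℝ)/2) * (((k:ℝ))⁻¹ + ((n:ℝ) - k)⁻¹) := by
  have hkR : (1:ℝ) ≤ k := by exact_mod_cast hk
  have hknR : (k:ℝ) < n := by exact_mod_cast hkn
  have hnR : (0:ℝ) < n := by linarith
  have hπ := pi_pos
  have hkpos : (0:ℝ) < k := by linarith
  have hnk : (0:ℝ) < (n:ℝ) - k := by linarith
  have hsp := cheb_aux_sin_pos hk hkn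
  rcases le_or_gt (2*(k:ℝ)) n with h | h
  · have h0 : (0:ℝ) ≤ π * k / n := by positivity
    have h1 : π * k / n ≤ π / 2 := by
      rw [div_le_div_iff₀ hnR (by norm_num)]
      nlinarith
    have hJ := Real.mul_le_sin h0 h1
    have hJ' : 2 * (k:ℝ) / n ≤ Real.sin (π * k / n) := by
      calc 2*(k:ℝ)/n = 2/π * (π * k / n) := by field_simp
        _ ≤ _ := hJ
    have h2 : (Real.sin (π * k / n))⁻¹ ≤ (2*(k:ℝ)/n)⁻¹ :=
      inv_anti₀ (by positivity) hJ'
    calc (Real.sin (π * k / n))⁻¹ ≤ (2*(k:ℝ)/n)⁻¹ := h2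
      _ = ((n:ℝ)/2) * ((k:ℝ))⁻¹ := by field_simp
      _ ≤ _ := by
          have : (0:ℝ) ≤ ((n:ℝ)/2) := by positivity
          nlinarith [inv_pos.mpr hnk]
  · have hrw : π * k / n = π - π * ((n:ℝ) - k) / n := by field_simp; ring
    have h0 : (0:ℝ) ≤ π * ((n:ℝ)-k) / n := by positivity
    have h1 : π * ((n:ℝ)-k) / n ≤ π / 2 := by
      rw [div_le_div_iff₀ hnR (by norm_num)]
      nlinarith
    have hJ := Real.mul_le_sin h0 h1
    have hJ' : 2 * ((n:ℝ)-k) / n ≤ Real.sin (π * k / n) := by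
      rw [hrw, Real.sin_pi_sub]
      calc 2*((n:ℝ)-k)/n = 2/π * (π * ((n:ℝ)-k) / n) := by field_simp
        _ ≤ _ := hJ
    have h2 : (Real.sin (π * k / n))⁻¹ ≤ (2*((n:ℝ)-k)/n)⁻¹ :=
      inv_anti₀ (by positivity) hJ'
    calc (Real.sin (π * k / n))⁻¹ ≤ (2*((n:ℝ)-k)/n)⁻¹ := h2
      _ = ((n:ℝ)/2) * ((n:ℝ)-k)⁻¹ := by field_simp
      _ ≤ _ := by
          have : (0:ℝ) ≤ ((n:ℝ)/2) := by positivity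
          nlinarith [inv_pos.mpr hkpos]

lemma cheb_first {N : ℕ} (hN : 3 ≤ N) :
    chebNode N 1 - chebNode N 0 = Real.sin (π / (4*((N:ℝ)-1))) ^ 2 := by
  have h1 : (1:ℕ) ≠ 0 := one_ne_zero
  have h2 : (1:ℕ) ≠ N := by omega
  have hn : ((N:ℝ)-1) ≠ 0 := by
    have : (3:ℝ) ≤ N := by exact_mod_cast hN
    linarith
  simp only [chebNode, if_neg h1, if_neg h2, if_pos rfl, if_true]
  have e1 : π*(2*((1:ℕ):ℝ)-1)/(2*((N:ℝ)-1)) = 2*(π/(4*((N:ℝ)-1))) := by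
    push_cast; field_simp; ring
  rw [e1, Real.sin_sq_eq_half_sub]
  ring

lemma cheb_last {N : ℕ} (hN : 3 ≤ N) :
    chebNode N N - chebNode N (N-1) = Real.sin (π / (4*((N:ℝ)-1))) ^ 2 := by
  have h1 : N ≠ 0 := by omega
  have h2 : N - 1 ≠ 0 := by omega
  have h3 : N - 1 ≠ N := by omega
  have hN3 : (3:ℝ) ≤ N := by exact_mod_cast hN
  have hn : ((N:ℝ)-1) ≠ 0 := by linarith
  have hc : ((N-1:ℕ):ℝ) = (N:ℝ)-1 := by
    have : (1:ℕ) ≤ N := by omega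
    push_cast [Nat.cast_sub this]; ring
  simp only [chebNode, if_neg h1, if_pos rfl, if_neg h2, if_neg h3, hc, if_true]
  have e1 : π*(2*((N:ℝ)-1)-1)/(2*((N:ℝ)-1)) = π - 2*(π/(4*((N:ℝ)-1))) := by
    field_simp; ring
  rw [e1, Real.cos_pi_sub, Real.sin_sq_eq_half_sub]
  ring

lemma cheb_mid {N j : ℕ} (hN : 3 ≤ N) (h2 : 2 ≤ j) (hj : j ≤ N-1) :
    chebNode N j - chebNode N (j-1) =
      Real.sin (π*((j:ℝ)-1)/((N:ℝ)-1)) * Real.sin (π/(2*((N:ℝ)-1))) := by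
  have hj0 : j ≠ 0 := by omega
  have hjN : j ≠ N := by omega
  have hj10 : j - 1 ≠ 0 := by omega
  have hj1N : j - 1 ≠ N := by omega
  have hN3 : (3:ℝ) ≤ N := by exact_mod_cast hN
  have hn : ((N:ℝ)-1) ≠ 0 := by linarith
  have hc : ((j-1:ℕ):ℝ) = (j:ℝ)-1 := by
    have : (1:ℕ) ≤ j := by omega
    push_cast [Nat.cast_sub this]; ring
  simp only [chebNode, if_neg hj0, if_neg hjN, if_neg hj10, if_neg hj1N, hc]
  have e1 : π*(2*((j:ℝ)-1)-1)/(2*((N:ℝ)-1))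
      = π*((j:ℝ)-1)/((N:ℝ)-1) - π/(2*((N:ℝ)-1)) := by field_simp
  have e2 : π*(2*(j:ℝ)-1)/(2*((N:ℝ)-1))
      = π*((j:ℝ)-1)/((N:ℝ)-1) + π/(2*((N:ℝ)-1)) := by field_simp; ring
  rw [e1, e2, Real.cos_sub, Real.cos_add]
  ring

lemma cheb_harm (m : ℕ) : ∑ k ∈ range m, ((k:ℝ)+1)⁻¹ ≤ 1 + Real.log m := by
  have h := harmonic_le_one_add_log m
  have he : ((harmonic m : ℚ) : ℝ) = ∑ k ∈ range m, ((k:ℝ)+1)⁻¹ := by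
    rw [harmonic]
    push_cast
    rfl
  linarith [he ▸ h]

lemma cheb_T1 {n : ℕ} (hn : 2 ≤ n) :
    ∑ j ∈ Icc 2 n, ((j:ℝ)-1)⁻¹ = ∑ k ∈ range (n-1), ((k:ℝ)+1)⁻¹ := by
  apply Finset.sum_nbij' (fun j => j - 2) (fun k => k + 2)
  · intro a ha; simp only [mem_Icc] at ha; simp only [mem_range]; omega
  · intro a ha; simp only [mem_range] at ha; simp only [mem_Icc]; omega
  · intro a ha; simp only [mem_Icc] at ha; omega
  · intro a ha; simp only [mem_range] at ha; omega
  · intro a ha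
    simp only [mem_Icc] at ha
    have : ((a-2:ℕ):ℝ) = (a:ℝ)-2 := by
      have : (2:ℕ) ≤ a := ha.1
      push_cast [Nat.cast_sub this]; ring
    rw [this]; ring_nf

lemma cheb_T2 {n : ℕ} (hn : 2 ≤ n) :
    ∑ j ∈ Icc 2 n, ((n:ℝ)-(j:ℝ)+1)⁻¹ = ∑ k ∈ range (n-1), ((k:ℝ)+1)⁻¹ := by
  apply Finset.sum_nbij' (fun j => n - j) (fun k => n - k)
  · intro a ha; simp only [mem_Icc] at ha; simp only [mem_range]; omega
  · intro a ha; simp only [mem_range] at ha; simp only [mem_Icc]; omega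
  · intro a ha; simp only [mem_Icc] at ha; omega
  · intro a ha; simp only [mem_range] at ha; omega
  · intro a ha
    simp only [mem_Icc] at ha
    have : ((n-a:ℕ):ℝ) = (n:ℝ)-a := by
      have : a ≤ n := ha.2
      push_cast [Nat.cast_sub this]; ring
    rw [this]


set_option maxHeartbeats 1000000 in
/-- For the Chebyshev mesh, the sum of reciprocal element lengths satisfies
`Σ_j 1/|K_j| ≤ C N² ln N`. -/
theorem chebyshev_mesh_reciprocal_sum_bound :
    ∃ C : ℝ, 0 < C ∧ ∀ N : ℕ, 3 ≤ N →
      ∑ j ∈ Finset.Icc 1 N, (chebNode N j - chebNode N (j - 1))⁻¹ ≤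
        C * N ^ 2 * Real.log N := by
  refine ⟨10, by norm_num, fun N hN => ?_⟩
  have hN3 : (3:ℝ) ≤ N := by exact_mod_cast hN
  set nR : ℝ := (N:ℝ) - 1 with hnR_def
  have hnR2 : (2:ℝ) ≤ nR := by simp [hnR_def]; linarith
  have hnRpos : (0:ℝ) < nR := by linarith
  have hn1 : 1 ≤ N - 1 := by omega
  have hnc : ((N-1:ℕ):ℝ) = nR := by
    have : (1:ℕ) ≤ N := by omega
    push_cast [Nat.cast_sub this]; ring
  -- log N ≥ 1
  have hlog1 : (1:ℝ) ≤ Real.log N := by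
    rw [Real.le_log_iff_exp_le (by linarith)]
    have := Real.exp_one_lt_d9
    linarith
  have hlogN0 : (0:ℝ) ≤ Real.log N := by linarith
  -- endpoint bound
  have hEs : (1:ℝ)/(2*nR) ≤ Real.sin (π/(4*nR)) := by
    have := cheb_aux_endpoint hn1
    rwa [hnc] at this
  have hEpos : (0:ℝ) < Real.sin (π/(4*nR)) :=
    lt_of_lt_of_le (by positivity) hEs
  have hE : (Real.sin (π/(4*nR)) ^ 2)⁻¹ ≤ 4*nR^2 := by
    have hsq : ((1:ℝ)/(2*nR))^2 ≤ Real.sin (π/(4*nR)) ^ 2 := by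
      apply pow_le_pow_left₀ (by positivity) hEs
    have := inv_anti₀ (by positivity : (0:ℝ) < ((1:ℝ)/(2*nR))^2) hsq
    calc (Real.sin (π/(4*nR)) ^ 2)⁻¹ ≤ (((1:ℝ)/(2*nR))^2)⁻¹ := this
      _ = 4*nR^2 := by field_simp; ring
  -- half-step sine bound
  have hHs : (1:ℝ)/nR ≤ Real.sin (π/(2*nR)) := by
    have := cheb_aux_half hn1
    rwa [hnc] at this
  have hHpos : (0:ℝ) < Real.sin (π/(2*nR)) := lt_of_lt_of_le (by positivity) hHs
  have hHinv : (Real.sin (π/(2*nR)))⁻¹ ≤ nR := by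
    have := inv_anti₀ (by positivity : (0:ℝ) < (1:ℝ)/nR) hHs
    calc (Real.sin (π/(2*nR)))⁻¹ ≤ ((1:ℝ)/nR)⁻¹ := this
      _ = nR := by field_simp
  -- split the sum
  have hsplit : Finset.Icc 1 N = insert 1 (insert N (Finset.Icc 2 (N-1))) := by
    ext x; simp only [mem_Icc, mem_insert]; omega
  have h1mem : (1:ℕ) ∉ insert N (Finset.Icc 2 (N-1)) := by
    simp only [mem_insert, mem_Icc]; omega
  have hNmem : N ∉ Finset.Icc 2 (N-1) := by
    simp only [mem_Icc]; omega
  rw [hsplit, Finset.sum_insert h1mem, Finset.sum_insert hNmem]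
  have hfirst : (chebNode N 1 - chebNode N (1-1))⁻¹ ≤ 4*nR^2 := by
    have e : (1:ℕ) - 1 = 0 := rfl
    rw [e, cheb_first hN]
    exact hE
  have hlast : (chebNode N N - chebNode N (N-1))⁻¹ ≤ 4*nR^2 := by
    rw [cheb_last hN]
    exact hE
  -- middle bound
  have hmid : ∑ j ∈ Finset.Icc 2 (N-1), (chebNode N j - chebNode N (j-1))⁻¹ ≤
      ∑ j ∈ Finset.Icc 2 (N-1), (nR^2/2) * (((j:ℝ)-1)⁻¹ + (nR-(j:ℝ)+1)⁻¹) := by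
    apply Finset.sum_le_sum
    intro j hj
    simp only [mem_Icc] at hj
    obtain ⟨hj2, hjn⟩ := hj
    rw [cheb_mid hN hj2 hjn]
    have hk1 : 1 ≤ j - 1 := by omega
    have hk2 : j - 1 < N - 1 := by omega
    have hkc : ((j-1:ℕ):ℝ) = (j:ℝ)-1 := by
      have : (1:ℕ) ≤ j := by omega
      push_cast [Nat.cast_sub this]; ring
    have hIS := cheb_aux_inv_sin hk1 hk2
    rw [hnc, hkc] at hIS
    have hspos : 0 < Real.sin (π*((j:ℝ)-1)/nR) := by
      have := cheb_aux_sin_pos hk1 hk2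
      rwa [hnc, hkc] at this
    rw [mul_inv]
    have hterm : (Real.sin (π*((j:ℝ)-1)/nR))⁻¹ * (Real.sin (π/(2*nR)))⁻¹ ≤
        ((nR/2) * (((j:ℝ)-1)⁻¹ + (nR-((j:ℝ)-1))⁻¹)) * nR := by
      apply mul_le_mul hIS hHinv (by positivity)
      have hj1R : (1:ℝ) ≤ (j:ℝ)-1 := by
        have : (2:ℝ) ≤ j := by exact_mod_cast hj2
        linarith
      have hjnR : (j:ℝ)-1 < nR := by
        have : ((j-1:ℕ):ℝ) < ((N-1:ℕ):ℝ) := by exact_mod_cast hk2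
        rwa [hnc, hkc] at this
      have i1 : (0:ℝ) < ((j:ℝ)-1)⁻¹ := by positivity
      have i2 : (0:ℝ) < (nR-((j:ℝ)-1))⁻¹ := by
        apply inv_pos.mpr; linarith
      positivity
    calc (Real.sin (π*((j:ℝ)-1)/nR))⁻¹ * (Real.sin (π/(2*nR)))⁻¹
        ≤ ((nR/2) * (((j:ℝ)-1)⁻¹ + (nR-((j:ℝ)-1))⁻¹)) * nR := hterm
      _ = (nR^2/2) * (((j:ℝ)-1)⁻¹ + (nR-(j:ℝ)+1)⁻¹) := by ring_nf
  -- evaluate the majorant sum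
  have hn2 : 2 ≤ N - 1 := by omega
  have hsum : ∑ j ∈ Finset.Icc 2 (N-1), (nR^2/2) * (((j:ℝ)-1)⁻¹ + (nR-(j:ℝ)+1)⁻¹)
      = (nR^2/2) * ((∑ j ∈ Finset.Icc 2 (N-1), ((j:ℝ)-1)⁻¹)
        + ∑ j ∈ Finset.Icc 2 (N-1), (nR-(j:ℝ)+1)⁻¹) := by
    rw [← Finset.mul_sum, Finset.sum_add_distrib]
  have hT1 : ∑ j ∈ Finset.Icc 2 (N-1), ((j:ℝ)-1)⁻¹ ≤ 1 + Real.log N := by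
    rw [cheb_T1 hn2]
    refine (cheb_harm (N-1-1)).trans ?_
    have : Real.log (↑(N-1-1)) ≤ Real.log N := by
      apply Real.log_le_log (by exact_mod_cast (by omega : 1 ≤ N-1-1))
      exact_mod_cast (by omega : N-1-1 ≤ N)
    linarith
  have hT2 : ∑ j ∈ Finset.Icc 2 (N-1), (nR-(j:ℝ)+1)⁻¹ ≤ 1 + Real.log N := by
    have : ∑ j ∈ Finset.Icc 2 (N-1), (nR-(j:ℝ)+1)⁻¹
        = ∑ j ∈ Finset.Icc 2 (N-1), (((N-1:ℕ):ℝ)-(j:ℝ)+1)⁻¹ := by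
      apply Finset.sum_congr rfl; intro j _; rw [hnc]
    rw [this, cheb_T2 hn2]
    refine (cheb_harm (N-1-1)).trans ?_
    have : Real.log (↑(N-1-1)) ≤ Real.log N := by
      apply Real.log_le_log (by exact_mod_cast (by omega : 1 ≤ N-1-1))
      exact_mod_cast (by omega : N-1-1 ≤ N)
    linarith
  -- combine
  have hmid2 : ∑ j ∈ Finset.Icc 2 (N-1), (chebNode N j - chebNode N (j-1))⁻¹ ≤
      nR^2 * (1 + Real.log N) := by
    refine hmid.trans ?_
    rw [hsum]
    have h12 : (∑ j ∈ Finset.Icc 2 (N-1), ((j:ℝ)-1)⁻¹)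
        + (∑ j ∈ Finset.Icc 2 (N-1), (nR-(j:ℝ)+1)⁻¹) ≤ 2*(1 + Real.log N) := by
      linarith
    nlinarith [sq_nonneg nR]
  have hNR : nR ≤ (N:ℝ) := by rw [hnR_def]; linarith
  have hsq : nR^2 ≤ (N:ℝ)^2 := by nlinarith
  calc (chebNode N 1 - chebNode N (1-1))⁻¹ +
        ((chebNode N N - chebNode N (N-1))⁻¹ +
          ∑ j ∈ Finset.Icc 2 (N-1), (chebNode N j - chebNode N (j-1))⁻¹)
      ≤ 4*nR^2 + (4*nR^2 + nR^2*(1 + Real.log N)) :=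
        add_le_add hfirst (add_le_add hlast hmid2)
    _ ≤ 10 * (N:ℝ)^2 * Real.log N := by nlinarith [sq_nonneg (N:ℝ)]
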